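/- For any integer 1 ≤ d₀ ≤ n: (a) if 0 < y ≤ (n−d₀)T/d₀, then lim_{θ→∞} F(y;θ | D ≥ d₀) = 0; (b) if (n−d₀)T/d₀ < y ≤ nT/d₀, then lim_{θ→∞} F(y;θ | D ≥ d₀) = Σ_{ν=0}^{d₀−1} (−1)^ν (max{d₀y − (n−d₀+ν)T, 0})^{d₀} / (ν!(d₀−ν)! T^{d₀}). -/

import Mathlib

open Filter Set

/-- CDF of the gamma distribution with integer shape `d ≥ 1` and scale 1
(equal to 0 for x ≤ 0). -/
noncomputable def gammaCDF (x : ℝ) (d : ℕ) : ℝ :=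
  (∫ u in (0:ℝ)..(max x 0), u ^ (d - 1) * Real.exp (-u)) / (Nat.factorial (d - 1))

/-- P_θ(D ≥ d₀) where D ~ Binomial(n, 1 − e^{−T/θ}). -/
noncomputable def probDge (n d0 : ℕ) (T θ : ℝ) : ℝ :=
  ∑ j ∈ Finset.Icc d0 n,
    (n.choose j : ℝ) * (1 - Real.exp (-T / θ)) ^ j * Real.exp (-((n:ℝ) - j) * T / θ)

/-- The conditional CDF F(y;θ | D ≥ d₀) of the MLE of the exponential mean under
type-I censoring at time T with n items (Bartholomew's formula). -/
noncomputable def condCDF_MLE (n d0 : ℕ) (T y θ : ℝ) : ℝ :=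
  (∑ d ∈ Finset.Icc d0 n, ∑ ν ∈ Finset.range (d + 1),
      (-1:ℝ) ^ ν * (n.choose d) * (d.choose ν) * Real.exp (-(((n:ℝ) - d + ν)) * T / θ) *
        gammaCDF ((d * y - ((n:ℝ) - d + ν) * T) / θ) d) / probDge n d0 T θ

/-- The limiting function Σ_{ν=0}^{d₀−1} (−1)^ν (d₀y − (n−d₀+ν)T)₊^{d₀}/(ν!(d₀−ν)! T^{d₀}). -/
noncomputable def limitSum (n d0 : ℕ) (T y : ℝ) : ℝ :=
  ∑ ν ∈ Finset.range d0,
    (-1:ℝ) ^ ν * (max ((d0:ℝ) * y - ((n:ℝ) - d0 + ν) * T) 0) ^ d0 /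
      ((Nat.factorial ν) * (Nat.factorial (d0 - ν)) * T ^ d0)

/-! After multiplying numerator and denominator by `θ ^ d₀`, everything is governed by two
first-order expansions: `θ ^ d * G(a / θ; d) → a₊ ^ d / d!` (squeeze `G(x; d)` between
`e⁻ˣ xᵈ / d!` and `xᵈ / d!`), so only the `d = d₀` terms of the numerator survive, and
`θ (1 - e^{-T/θ}) → T`, so only the `j = d₀` term of `θ ^ d₀ P_θ(D ≥ d₀)` survives, with limit
`C(n, d₀) T ^ d₀`. For `d₀ y ≤ n T` the `ν = d₀` term of the limit vanishes, and
`C(d₀, ν) / d₀! = 1 / (ν! (d₀ - ν)!)` turns the quotient into `limitSum`; for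
`d₀ y ≤ (n - d₀) T` every positive part vanishes. -/

open Real Topology
open scoped Nat

lemma tendsto_exp_div_atTop (c : ℝ) : Tendsto (fun θ : ℝ => exp (c / θ)) atTop (𝓝 1) := by
  simpa [Function.comp_def] using
    (continuous_exp.tendsto 0).comp (tendsto_const_nhds.div_atTop tendsto_id)

lemma tendsto_mul_one_sub_exp_neg_div {T : ℝ} (hT : 0 < T) :
    Tendsto (fun θ : ℝ => θ * (1 - exp (-T / θ))) atTop (𝓝 T) := by
  have hslope : Tendsto (slope (fun x => exp (-x)) 0) (𝓝[≠] 0) (𝓝 (-1)) := by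
    simpa using hasDerivAt_iff_tendsto_slope.mp ((hasDerivAt_neg 0).exp)
  have hx : Tendsto (fun θ : ℝ => T / θ) atTop (𝓝[≠] 0) :=
    tendsto_nhdsWithin_of_tendsto_nhds_of_eventually_within _
      (tendsto_const_nhds.div_atTop tendsto_id)
      (by filter_upwards [eventually_gt_atTop 0] with θ hθ using (div_pos hT hθ).ne')
  refine ((hslope.comp hx).const_mul (-T)).congr' ?_ |>.trans (by simp)
  filter_upwards [eventually_gt_atTop 0] with θ hθ
  simp only [Function.comp_apply, slope_def_field, neg_zero, exp_zero, sub_zero, neg_div]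
  field_simp
  ring

lemma integral_pow_mul_exp_neg_le (k : ℕ) {x : ℝ} (hx : 0 ≤ x) :
    ∫ u in (0:ℝ)..x, u ^ k * exp (-u) ≤ x ^ (k + 1) / (k + 1) := by
  calc ∫ u in (0:ℝ)..x, u ^ k * exp (-u) ≤ ∫ u in (0:ℝ)..x, u ^ k := by
        refine intervalIntegral.integral_mono_on hx
          ((by fun_prop : Continuous _).intervalIntegrable _ _)
          ((by fun_prop : Continuous _).intervalIntegrable _ _) fun u hu => ?_
        exact mul_le_of_le_one_right (pow_nonneg hu.1 k) (exp_le_one_iff.mpr (by linarith [hu.1]))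
    _ = x ^ (k + 1) / (k + 1) := by simp [integral_pow]

lemma exp_neg_mul_le_integral_pow_mul_exp_neg (k : ℕ) {x : ℝ} (hx : 0 ≤ x) :
    exp (-x) * (x ^ (k + 1) / (k + 1)) ≤ ∫ u in (0:ℝ)..x, u ^ k * exp (-u) := by
  calc exp (-x) * (x ^ (k + 1) / (k + 1)) = ∫ u in (0:ℝ)..x, u ^ k * exp (-x) := by
        simp [integral_pow, mul_comm]
    _ ≤ ∫ u in (0:ℝ)..x, u ^ k * exp (-u) := by
        refine intervalIntegral.integral_mono_on hx
          ((by fun_prop : Continuous _).intervalIntegrable _ _)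
          ((by fun_prop : Continuous _).intervalIntegrable _ _) fun u hu => ?_
        exact mul_le_mul_of_nonneg_left (exp_le_exp.mpr (by linarith [hu.2])) (pow_nonneg hu.1 k)

lemma gammaCDF_of_nonpos {x : ℝ} (hx : x ≤ 0) (d : ℕ) : gammaCDF x d = 0 := by
  simp [gammaCDF, max_eq_right hx]

lemma gammaCDF_succ_of_nonneg {x : ℝ} (hx : 0 ≤ x) (k : ℕ) :
    gammaCDF x (k + 1) = (∫ u in (0:ℝ)..x, u ^ k * exp (-u)) / k ! := by
  simp [gammaCDF, max_eq_left hx]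

lemma gammaCDF_le {x : ℝ} (hx : 0 ≤ x) {d : ℕ} (hd : 1 ≤ d) : gammaCDF x d ≤ x ^ d / d ! := by
  obtain ⟨k, rfl⟩ := Nat.exists_eq_add_of_le' hd
  rw [gammaCDF_succ_of_nonneg hx, Nat.factorial_succ, Nat.cast_mul, ← div_div]
  gcongr
  exact_mod_cast integral_pow_mul_exp_neg_le k hx

lemma exp_neg_mul_le_gammaCDF {x : ℝ} (hx : 0 ≤ x) {d : ℕ} (hd : 1 ≤ d) :
    exp (-x) * (x ^ d / d !) ≤ gammaCDF x d := by
  obtain ⟨k, rfl⟩ := Nat.exists_eq_add_of_le' hd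
  rw [gammaCDF_succ_of_nonneg hx, Nat.factorial_succ, Nat.cast_mul, ← div_div, ← mul_div_assoc]
  gcongr
  exact_mod_cast exp_neg_mul_le_integral_pow_mul_exp_neg k hx

lemma tendsto_pow_mul_gammaCDF_div (a : ℝ) {d : ℕ} (hd : 1 ≤ d) :
    Tendsto (fun θ : ℝ => θ ^ d * gammaCDF (a / θ) d) atTop (𝓝 (max a 0 ^ d / d !)) := by
  rcases le_or_gt a 0 with ha | ha
  · rw [max_eq_right ha, zero_pow (by omega), zero_div]
    refine tendsto_const_nhds.congr' ?_
    filter_upwards [eventually_gt_atTop 0] with θ hθ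
    rw [gammaCDF_of_nonpos (div_nonpos_of_nonpos_of_nonneg ha hθ.le), mul_zero]
  have hscale : ∀ θ : ℝ, 0 < θ → θ ^ d * (a / θ) ^ d = a ^ d := fun θ hθ => by
    rw [← mul_pow, mul_div_cancel₀ a hθ.ne']
  rw [max_eq_left ha.le]
  refine tendsto_of_tendsto_of_tendsto_of_le_of_le' (g := fun θ => exp (-a / θ) * (a ^ d / d !))
    (by simpa using (tendsto_exp_div_atTop (-a)).mul_const (a ^ d / d !)) tendsto_const_nhds
    ?_ ?_
  · filter_upwards [eventually_gt_atTop 0] with θ hθ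
    calc exp (-a / θ) * (a ^ d / d !) = θ ^ d * (exp (-(a / θ)) * ((a / θ) ^ d / d !)) := by
          rw [← hscale θ hθ, neg_div]; ring
      _ ≤ θ ^ d * gammaCDF (a / θ) d := by
          gcongr; exact exp_neg_mul_le_gammaCDF (div_pos ha hθ).le hd
  · filter_upwards [eventually_gt_atTop 0] with θ hθ
    calc θ ^ d * gammaCDF (a / θ) d ≤ θ ^ d * ((a / θ) ^ d / d !) := by
          gcongr; exact gammaCDF_le (div_pos ha hθ).le hd
      _ = a ^ d / d ! := by rw [← hscale θ hθ]; ring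

lemma tendsto_pow_mul_gammaCDF_div_of_le (a : ℝ) {d₀ d : ℕ} (hd₀ : 1 ≤ d₀) (hd : d₀ ≤ d) :
    Tendsto (fun θ : ℝ => θ ^ d₀ * gammaCDF (a / θ) d) atTop
      (𝓝 (if d = d₀ then max a 0 ^ d / d ! else 0)) := by
  have hlim := tendsto_pow_mul_gammaCDF_div a (hd₀.trans hd)
  split_ifs with he
  · subst he; exact hlim
  have hdecay : Tendsto (fun θ : ℝ => (θ ^ (d - d₀))⁻¹) atTop (𝓝 0) :=
    tendsto_inv_atTop_zero.comp (tendsto_pow_atTop (by omega))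
  refine (hlim.mul hdecay).congr' ?_ |>.trans (by rw [mul_zero])
  filter_upwards [eventually_gt_atTop 0] with θ hθ
  rw [pow_sub₀ θ hθ.ne' hd]
  field_simp

lemma tendsto_pow_mul_probDge {n d₀ : ℕ} (h : d₀ ≤ n) {T : ℝ} (hT : 0 < T) :
    Tendsto (fun θ : ℝ => θ ^ d₀ * probDge n d₀ T θ) atTop (𝓝 (n.choose d₀ * T ^ d₀)) := by
  set p : ℝ → ℝ := fun θ => 1 - exp (-T / θ)
  have hp : Tendsto p atTop (𝓝 0) := by
    simpa using (tendsto_const_nhds (x := (1:ℝ))).sub (tendsto_exp_div_atTop (-T))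
  have hrw : ∀ θ : ℝ, θ ^ d₀ * probDge n d₀ T θ = ∑ j ∈ Finset.Icc d₀ n,
      n.choose j * ((θ * p θ) ^ d₀ * p θ ^ (j - d₀) * exp (-((n:ℝ) - j) * T / θ)) := fun θ => by
    rw [probDge, Finset.mul_sum]
    refine Finset.sum_congr rfl fun j hj => ?_
    rw [mul_pow, mul_assoc (θ ^ d₀), ← pow_add, Nat.add_sub_cancel' (Finset.mem_Icc.mp hj).1]
    ring
  have hlim := tendsto_finsetSum (Finset.Icc d₀ n) fun j _ =>
    tendsto_const_nhds (x := (n.choose j : ℝ)) |>.mul <|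
      (((tendsto_mul_one_sub_exp_neg_div hT).pow d₀).mul (hp.pow (j - d₀))).mul
        (tendsto_exp_div_atTop (-((n:ℝ) - j) * T))
  simp only [hrw]
  convert hlim using 2
  rw [Finset.sum_eq_single_of_mem d₀ (Finset.mem_Icc.mpr ⟨le_rfl, h⟩)]
  · simp
  · intro j hj hne
    rw [zero_pow (by have := (Finset.mem_Icc.mp hj).1; omega)]
    ring

noncomputable def condCDFNumerator (n d₀ : ℕ) (T y θ : ℝ) : ℝ :=
  ∑ d ∈ Finset.Icc d₀ n, ∑ ν ∈ Finset.range (d + 1),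
    (-1:ℝ) ^ ν * (n.choose d) * (d.choose ν) * exp (-(((n:ℝ) - d + ν)) * T / θ) *
      gammaCDF ((d * y - ((n:ℝ) - d + ν) * T) / θ) d

lemma tendsto_pow_mul_condCDFNumerator {n d₀ : ℕ} (h1 : 1 ≤ d₀) (h2 : d₀ ≤ n) (T y : ℝ) :
    Tendsto (fun θ : ℝ => θ ^ d₀ * condCDFNumerator n d₀ T y θ) atTop
      (𝓝 (∑ ν ∈ Finset.range (d₀ + 1), (-1:ℝ) ^ ν * n.choose d₀ * d₀.choose ν *
        (max ((d₀:ℝ) * y - ((n:ℝ) - d₀ + ν) * T) 0 ^ d₀ / d₀ !))) := by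
  have hrw : ∀ θ : ℝ, θ ^ d₀ * condCDFNumerator n d₀ T y θ =
      ∑ d ∈ Finset.Icc d₀ n, ∑ ν ∈ Finset.range (d + 1),
        (-1:ℝ) ^ ν * (n.choose d) * (d.choose ν) * exp (-(((n:ℝ) - d + ν)) * T / θ) *
          (θ ^ d₀ * gammaCDF ((d * y - ((n:ℝ) - d + ν) * T) / θ) d) := fun θ => by
    simp only [condCDFNumerator, Finset.mul_sum]
    exact Finset.sum_congr rfl fun _ _ => Finset.sum_congr rfl fun _ _ => by ring
  have hlim := tendsto_finsetSum (Finset.Icc d₀ n) fun d hd =>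
    tendsto_finsetSum (Finset.range (d + 1)) fun ν _ =>
      (tendsto_const_nhds (x := (-1:ℝ) ^ ν * n.choose d * d.choose ν)).mul
        (tendsto_exp_div_atTop (-(((n:ℝ) - d + ν)) * T)) |>.mul
        (tendsto_pow_mul_gammaCDF_div_of_le (d * y - ((n:ℝ) - d + ν) * T) h1
          (Finset.mem_Icc.mp hd).1)
  simp only [hrw]
  convert hlim using 2
  rw [Finset.sum_eq_single_of_mem d₀ (Finset.mem_Icc.mpr ⟨le_rfl, h2⟩)]
  · simp
  · intro d _ hne
    simp [hne]

lemma limitSum_eq_sum_range_succ_div {n d₀ : ℕ} (h1 : 1 ≤ d₀) (h2 : d₀ ≤ n) {T : ℝ} (hT : 0 < T)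
    {y : ℝ} (hy : d₀ * y ≤ n * T) :
    limitSum n d₀ T y = (∑ ν ∈ Finset.range (d₀ + 1), (-1:ℝ) ^ ν * n.choose d₀ * d₀.choose ν *
        (max ((d₀:ℝ) * y - ((n:ℝ) - d₀ + ν) * T) 0 ^ d₀ / d₀ !)) / (n.choose d₀ * T ^ d₀) := by
  have hlast : max ((d₀:ℝ) * y - ((n:ℝ) - d₀ + d₀) * T) 0 = 0 := max_eq_right (by linarith)
  have hchoose : (n.choose d₀ : ℝ) ≠ 0 := Nat.cast_ne_zero.mpr (Nat.choose_pos h2).ne'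
  rw [Finset.sum_range_succ, hlast, zero_pow (by omega), zero_div, mul_zero, add_zero,
    Finset.sum_div, limitSum]
  refine Finset.sum_congr rfl fun ν hν => ?_
  rw [Nat.cast_choose ℝ (Finset.mem_range.mp hν).le]
  field_simp

lemma limitSum_eq_zero {n d₀ : ℕ} (h1 : 1 ≤ d₀) {T : ℝ} (hT : 0 ≤ T) {y : ℝ}
    (hy : d₀ * y ≤ (n - d₀) * T) : limitSum n d₀ T y = 0 := by
  refine Finset.sum_eq_zero fun ν _ => ?_
  have hν : (0:ℝ) ≤ ν * T := mul_nonneg ν.cast_nonneg hT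
  rw [max_eq_right (by linarith), zero_pow (by omega), mul_zero, zero_div]

lemma tendsto_condCDF_MLE_atTop {n d₀ : ℕ} (h1 : 1 ≤ d₀) (h2 : d₀ ≤ n) {T : ℝ} (hT : 0 < T)
    {y : ℝ} (hy : d₀ * y ≤ n * T) :
    Tendsto (fun θ : ℝ => condCDF_MLE n d₀ T y θ) atTop (𝓝 (limitSum n d₀ T y)) := by
  have hden : (n.choose d₀ : ℝ) * T ^ d₀ ≠ 0 :=
    mul_ne_zero (Nat.cast_ne_zero.mpr (Nat.choose_pos h2).ne') (pow_ne_zero _ hT.ne')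
  rw [limitSum_eq_sum_range_succ_div h1 h2 hT hy]
  refine ((tendsto_pow_mul_condCDFNumerator h1 h2 T y).div (tendsto_pow_mul_probDge h2 hT)
    hden).congr' ?_
  filter_upwards [eventually_gt_atTop 0] with θ hθ
  exact mul_div_mul_left _ _ (pow_ne_zero d₀ hθ.ne')

/-- Theorem 2 (limits as θ → ∞): for 1 ≤ d₀ ≤ n, the limit of F(y;θ | D ≥ d₀) as
θ → ∞ is 0 if 0 < y ≤ (n−d₀)T/d₀ and equals the stated sum if (n−d₀)T/d₀ < y ≤ nT/d₀. -/
theorem condCDF_MLE_limit_at_infty (n d0 : ℕ) (h1 : 1 ≤ d0) (h2 : d0 ≤ n)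
    (T : ℝ) (hT : 0 < T) (y : ℝ) :
    (0 < y → y ≤ ((n:ℝ) - d0) * T / d0 →
      Tendsto (fun θ : ℝ => condCDF_MLE n d0 T y θ) atTop (nhds 0)) ∧
    (((n:ℝ) - d0) * T / d0 < y → y ≤ (n:ℝ) * T / d0 →
      Tendsto (fun θ : ℝ => condCDF_MLE n d0 T y θ) atTop (nhds (limitSum n d0 T y))) := by
  have hd0 : (0:ℝ) < d0 := by exact_mod_cast h1
  have hnd : (d0:ℝ) ≤ n := by exact_mod_cast h2
  refine ⟨fun _ hy => ?_, fun _ hy => ?_⟩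
  · have hy' : d0 * y ≤ (n - d0) * T := (le_div_iff₀' hd0).mp hy
    rw [← limitSum_eq_zero h1 hT.le hy']
    exact tendsto_condCDF_MLE_atTop h1 h2 hT (by nlinarith)
  · exact tendsto_condCDF_MLE_atTop h1 h2 hT ((le_div_iff₀' hd0).mp hy)
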